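/- Let n ≥ 3 and let 𝒫 be the set of n×n complex matrices P with P = P* and P·P = P. There is no function μ : 𝒫 → ℕ such that μ(1) = 1 and μ(P + Q) = μ(P) + μ(Q) whenever P, Q ∈ 𝒫 satisfy P·Q = 0. (This is the Kochen–Specker theorem in the simplicial framework: for a finite-dimensional Hilbert space H with dim H ≥ 3, the map of simplicial sets δ : S¹ → P_H S¹ admits no splitting.) -/

import Mathlib

/-!
Restricted to the diagonal projections, `μ` is an additive `ℕ`-valued function of sets of
coordinates with total mass `1`, i.e. a point mass; hence some coordinate `3`-space has projection
of measure `1`, and compressing `μ` to that subspace gives such a measure on `3 × 3` matrices.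
There the rank-one projections onto real vectors make `μ` a colouring of `ℝ³ ∖ 0` taking the
value `1` exactly once on every orthogonal frame, and Peres's `33` vectors admit no such colouring.
-/

open Matrix

/-- The set of orthogonal projections: Hermitian idempotent `n × n` complex matrices. -/
def Projs (n : ℕ) : Set (Matrix (Fin n) (Fin n) ℂ) :=
  {P | P.IsHermitian ∧ P * P = P}

section Projections

variable {n m : ℕ}

lemma zero_mem_projs : (0 : Matrix (Fin n) (Fin n) ℂ) ∈ Projs n :=
  ⟨isHermitian_zero, zero_mul 0⟩

lemma one_mem_projs : (1 : Matrix (Fin n) (Fin n) ℂ) ∈ Projs n :=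
  ⟨isHermitian_one, one_mul 1⟩

lemma add_mem_projs {P Q : Matrix (Fin n) (Fin n) ℂ} (hP : P ∈ Projs n) (hQ : Q ∈ Projs n)
    (hPQ : P * Q = 0) : P + Q ∈ Projs n := by
  have hQP : Q * P = 0 := by
    simpa [conjTranspose_mul, hP.1.eq, hQ.1.eq] using congrArg conjTranspose hPQ
  refine ⟨hP.1.add hQ.1, ?_⟩
  rw [add_mul, mul_add, mul_add, hP.2, hQ.2, hPQ, hQP, add_zero, zero_add]

lemma ofRealHom_mapMatrix_mem_projs {A : Matrix (Fin n) (Fin n) ℝ} (hA : Aᵀ = A)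
    (hAA : A * A = A) : Complex.ofRealHom.mapMatrix A ∈ Projs n := by
  refine ⟨?_, by rw [← map_mul, hAA]⟩
  rw [RingHom.mapMatrix_apply]
  refine IsHermitian.map ?_ _ fun x => ?_
  · rwa [IsHermitian, conjTranspose_eq_transpose_of_trivial]
  · simp

lemma conj_mul_conj {R ι κ : Type*} [Semiring R] [Star R] [Fintype ι] [Fintype κ]
    [DecidableEq κ] {E : Matrix ι κ R} (hE : Eᴴ * E = 1) (A B : Matrix κ κ R) :
    E * A * Eᴴ * (E * B * Eᴴ) = E * (A * B) * Eᴴ := by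
  simp only [Matrix.mul_assoc]
  rw [← Matrix.mul_assoc Eᴴ, hE, Matrix.one_mul]

lemma conj_mem_projs {E : Matrix (Fin n) (Fin m) ℂ} (hE : Eᴴ * E = 1)
    {A : Matrix (Fin m) (Fin m) ℂ} (hA : A ∈ Projs m) : E * A * Eᴴ ∈ Projs n :=
  ⟨isHermitian_mul_mul_conjTranspose E hA.1, by rw [conj_mul_conj hE, hA.2]⟩

end Projections

section Coordinates

variable {n m : ℕ}

def coordProj (S : Finset (Fin n)) : Matrix (Fin n) (Fin n) ℂ :=
  diagonal fun i => if i ∈ S then 1 else 0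

lemma coordProj_mem_projs (S : Finset (Fin n)) : coordProj S ∈ Projs n := by
  refine ⟨by simp [coordProj, IsHermitian, diagonal_conjTranspose], ?_⟩
  rw [coordProj, diagonal_mul_diagonal]
  congr 1
  funext i
  split_ifs <;> simp

lemma coordProj_empty : coordProj (∅ : Finset (Fin n)) = 0 := by
  simp [coordProj]

lemma coordProj_univ : coordProj (Finset.univ : Finset (Fin n)) = 1 := by
  simp [coordProj]

lemma coordProj_mul_coordProj {S T : Finset (Fin n)} (h : Disjoint S T) :
    coordProj S * coordProj T = 0 := by
  rw [coordProj, coordProj, diagonal_mul_diagonal, ← diagonal_zero]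
  congr 1
  funext i
  by_cases hS : i ∈ S
  · simp [hS, Finset.disjoint_left.1 h hS]
  · simp [hS]

lemma coordProj_union {S T : Finset (Fin n)} (h : Disjoint S T) :
    coordProj (S ∪ T) = coordProj S + coordProj T := by
  rw [coordProj, coordProj, coordProj, diagonal_add]
  congr 1
  funext i
  by_cases hS : i ∈ S
  · simp [hS, Finset.disjoint_left.1 h hS]
  · simp [hS]

def coordIsometry (f : Fin m → Fin n) : Matrix (Fin n) (Fin m) ℂ :=
  of fun i j => if i = f j then 1 else 0

lemma conjTranspose_coordIsometry_mul {f : Fin m → Fin n} (hf : f.Injective) :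
    (coordIsometry f)ᴴ * coordIsometry f = 1 := by
  ext j k
  simp [coordIsometry, mul_apply, one_apply, hf.eq_iff, eq_comm]

lemma coordIsometry_mul_conjTranspose {f : Fin m → Fin n} (hf : f.Injective) :
    coordIsometry f * (coordIsometry f)ᴴ = coordProj (Finset.univ.image f) := by
  ext i j
  simp only [coordIsometry, coordProj, mul_apply, conjTranspose_apply, of_apply, diagonal_apply,
    Finset.mem_image, Finset.mem_univ, true_and]
  by_cases hi : ∃ a, f a = i
  · obtain ⟨a, rfl⟩ := hi
    rw [Finset.sum_eq_single a (fun b _ hb => by simp [hf.ne hb.symm]) (by simp)]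
    by_cases hj : f a = j
    · subst hj
      simp
    · simp [hj, Ne.symm hj]
  · simp only [not_exists] at hi
    simp [hi, Ne.symm (hi _)]

end Coordinates

section RankOne

variable {K ι : Type*} [Field K] [Fintype ι]

noncomputable def rankOneProj (u : ι → K) : Matrix ι ι K :=
  (u ⬝ᵥ u)⁻¹ • vecMulVec u u

lemma rankOneProj_mul_rankOneProj (u v : ι → K) :
    rankOneProj u * rankOneProj v = ((u ⬝ᵥ u)⁻¹ * (v ⬝ᵥ v)⁻¹ * (u ⬝ᵥ v)) • vecMulVec u v := by
  rw [rankOneProj, rankOneProj, smul_mul_smul_comm, vecMulVec_mul_vecMulVec, vecMulVec_smul,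
    smul_smul]

lemma rankOneProj_mul_eq_zero {u v : ι → K} (huv : u ⬝ᵥ v = 0) :
    rankOneProj u * rankOneProj v = 0 := by
  rw [rankOneProj_mul_rankOneProj, huv, mul_zero, zero_smul]

lemma transpose_rankOneProj (u : ι → K) : (rankOneProj u)ᵀ = rankOneProj u := by
  rw [rankOneProj, transpose_smul, transpose_vecMulVec]

variable [LinearOrder K] [IsStrictOrderedRing K]

lemma rankOneProj_mul_self {u : ι → K} (hu : u ≠ 0) :
    rankOneProj u * rankOneProj u = rankOneProj u := by
  rw [rankOneProj_mul_rankOneProj, mul_assoc, inv_mul_cancel₀ (dotProduct_self_eq_zero.not.2 hu),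
    mul_one, rankOneProj]

/-- Completeness of an orthogonal basis: `Qᵀ D Q = 1` where `Q` has rows `b i` and
`D = diag (b i ⬝ᵥ b i)⁻¹`, because `D Q Qᵀ = 1`. -/
theorem sum_rankOneProj_eq_one [DecidableEq ι] {b : ι → ι → K} (hb : ∀ i, b i ≠ 0)
    (horth : Pairwise fun i j => b i ⬝ᵥ b j = 0) : ∑ i, rankOneProj (b i) = 1 := by
  set Q : Matrix ι ι K := of b
  set D : Matrix ι ι K := diagonal fun i => (b i ⬝ᵥ b i)⁻¹
  have hQQ : Q * Qᵀ = diagonal fun i => b i ⬝ᵥ b i := by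
    ext i j
    rcases eq_or_ne i j with rfl | hij
    · simp [Q, mul_apply, dotProduct]
    · simpa [Q, mul_apply, dotProduct, hij] using horth hij
  have hDQQ : D * Q * Qᵀ = 1 := by
    rw [Matrix.mul_assoc, hQQ, diagonal_mul_diagonal, ← diagonal_one]
    exact congrArg diagonal
      (funext fun i => inv_mul_cancel₀ (dotProduct_self_eq_zero.not.2 (hb i)))
  rw [← mul_eq_one_comm.1 hDQQ]
  ext x y
  simp only [rankOneProj, Matrix.sum_apply, Matrix.smul_apply, vecMulVec_apply, smul_eq_mul,
    diagonal, mul_apply, transpose_apply, of_apply, ite_mul, zero_mul, Finset.sum_ite_eq,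
    Finset.mem_univ, ↓reduceIte, Q, D]
  exact Finset.sum_congr rfl fun i _ => by ring

end RankOne

section Coloring

lemma crossProduct_ne_zero_of_dotProduct_eq_zero {u v : Fin 3 → ℝ} (hu : u ≠ 0) (hv : v ≠ 0)
    (huv : u ⬝ᵥ v = 0) : u ⨯₃ v ≠ 0 := by
  intro h
  have := cross_dot_cross u v u v
  rw [h, huv, zero_dotProduct, zero_mul, sub_zero] at this
  exact mul_ne_zero (dotProduct_self_eq_zero.not.2 hu) (dotProduct_self_eq_zero.not.2 hv) this.symm

def IsKSColoring (g : (Fin 3 → ℝ) → ℕ) : Prop :=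
  ∀ u v w : Fin 3 → ℝ, u ≠ 0 → v ≠ 0 → w ≠ 0 → u ⬝ᵥ v = 0 → u ⬝ᵥ w = 0 → v ⬝ᵥ w = 0 →
    g u + g v + g w = 1

lemma IsKSColoring.add_le_one {g : (Fin 3 → ℝ) → ℕ} (hg : IsKSColoring g) {u v : Fin 3 → ℝ}
    (hu : u ≠ 0) (hv : v ≠ 0) (huv : u ⬝ᵥ v = 0) : g u + g v ≤ 1 := by
  have := hg u v (u ⨯₃ v) hu hv (crossProduct_ne_zero_of_dotProduct_eq_zero hu hv huv) huv
    (dot_self_cross u v) (dot_cross_self u v)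
  omega

/-- Peres's rays: the permutations of `(0, 0, 1)`, `(0, ±1, 1)`, `(0, ±1, √2)` and
`(±1, ±1, √2)`, up to sign. -/
noncomputable def peres : Fin 33 → Fin 3 → ℝ :=
  ![![0, 0, 1], ![0, √2, -1], ![0, √2, 1], ![0, 1, -1], ![0, 1, -√2], ![0, 1, 0], ![0, 1, √2],
    ![0, 1, 1], ![√2, -1, -1], ![√2, -1, 0], ![√2, -1, 1], ![√2, 0, -1], ![√2, 0, 1],
    ![√2, 1, -1], ![√2, 1, 0], ![√2, 1, 1], ![1, -1, -√2], ![1, -1, 0], ![1, -1, √2],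
    ![1, -√2, -1], ![1, -√2, 0], ![1, -√2, 1], ![1, 0, -1], ![1, 0, -√2], ![1, 0, 0],
    ![1, 0, √2], ![1, 0, 1], ![1, √2, -1], ![1, √2, 0], ![1, √2, 1], ![1, 1, -√2], ![1, 1, 0],
    ![1, 1, √2]]

def peresTriples : List (Fin 33 × Fin 33 × Fin 33) :=
  [(0, 5, 24), (0, 9, 28), (0, 14, 20), (0, 17, 31), (1, 6, 24), (2, 4, 24), (3, 7, 24),
   (3, 8, 15), (5, 11, 25), (5, 12, 23), (5, 22, 26), (7, 10, 13), (16, 18, 31),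
   (17, 30, 32), (19, 26, 27), (21, 22, 29)]

def peresPairs : List (Fin 33 × Fin 33) :=
  [(1, 16), (1, 32), (2, 18), (2, 30), (4, 19), (4, 29), (6, 21), (6, 27), (8, 25), (8, 28),
   (9, 27), (9, 29), (10, 23), (10, 28), (11, 18), (11, 32), (12, 16), (12, 30), (13, 20),
   (13, 25), (14, 19), (14, 21), (15, 20), (15, 23)]

lemma peres_ne_zero (i : Fin 33) : peres i ≠ 0 := by
  fin_cases i <;> simp [peres]

lemma peres_triple_orthogonal :
    ∀ t ∈ peresTriples, peres t.1 ⬝ᵥ peres t.2.1 = 0 ∧ peres t.1 ⬝ᵥ peres t.2.2 = 0 ∧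
      peres t.2.1 ⬝ᵥ peres t.2.2 = 0 := by
  simp [peresTriples, peres, dotProduct, Fin.sum_univ_three, ← one_add_one_eq_two]

lemma peres_pair_orthogonal : ∀ p ∈ peresPairs, peres p.1 ⬝ᵥ peres p.2 = 0 := by
  simp [peresPairs, peres, dotProduct, Fin.sum_univ_three]

lemma peres_not_colorable (x : Fin 33 → ℕ)
    (htriple : ∀ t ∈ peresTriples, x t.1 + x t.2.1 + x t.2.2 = 1)
    (hpair : ∀ p ∈ peresPairs, x p.1 + x p.2 ≤ 1) : False := by
  simp only [peresTriples, peresPairs, List.forall_mem_cons] at htriple hpair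
  lia

theorem not_isKSColoring (g : (Fin 3 → ℝ) → ℕ) : ¬ IsKSColoring g := by
  intro hg
  refine peres_not_colorable (g ∘ peres) (fun t ht => ?_) (fun p hp => ?_)
  · obtain ⟨h₁₂, h₁₃, h₂₃⟩ := peres_triple_orthogonal t ht
    exact hg _ _ _ (peres_ne_zero _) (peres_ne_zero _) (peres_ne_zero _) h₁₂ h₁₃ h₂₃
  · exact hg.add_le_one (peres_ne_zero _) (peres_ne_zero _) (peres_pair_orthogonal p hp)

end Coloring

/-- Only the values at `Projs n` matter. -/
structure IsProjMeasure {n : ℕ} (μ : Matrix (Fin n) (Fin n) ℂ → ℕ) : Prop where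
  apply_one : μ 1 = 1
  apply_add {P Q : Matrix (Fin n) (Fin n) ℂ} :
    P ∈ Projs n → Q ∈ Projs n → P * Q = 0 → μ (P + Q) = μ P + μ Q

namespace IsProjMeasure

variable {n m : ℕ} {μ : Matrix (Fin n) (Fin n) ℂ → ℕ}

theorem apply_zero (hμ : IsProjMeasure μ) : μ 0 = 0 := by
  have := hμ.apply_add zero_mem_projs zero_mem_projs (zero_mul 0)
  rw [add_zero] at this
  omega

theorem apply_coordProj (hμ : IsProjMeasure μ) (S : Finset (Fin n)) :
    μ (coordProj S) = ∑ j ∈ S, μ (coordProj {j}) := by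
  induction S using Finset.induction_on with
  | empty => rw [Finset.sum_empty, coordProj_empty, hμ.apply_zero]
  | insert j S hj ih =>
    have hdisj : Disjoint {j} S := Finset.disjoint_singleton_left.2 hj
    rw [Finset.insert_eq, coordProj_union hdisj, Finset.sum_union hdisj, Finset.sum_singleton,
      hμ.apply_add (coordProj_mem_projs _) (coordProj_mem_projs _) (coordProj_mul_coordProj hdisj),
      ih]

theorem exists_coordProj_eq_one (hμ : IsProjMeasure μ) (h1 : 1 ≤ m) (hm : m ≤ n) :
    ∃ S : Finset (Fin n), S.card = m ∧ μ (coordProj S) = 1 := by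
  have htotal : ∑ j, μ (coordProj {j}) = 1 := by
    rw [← hμ.apply_coordProj, coordProj_univ, hμ.apply_one]
  obtain ⟨k, -, hk⟩ := Finset.exists_ne_zero_of_sum_ne_zero (htotal ▸ one_ne_zero)
  obtain ⟨S, hkS, -, hS⟩ := Finset.exists_subsuperset_card_eq (Finset.subset_univ {k})
    (by simpa using h1) (by simpa using hm)
  refine ⟨S, hS, le_antisymm ?_ ?_⟩
  · rw [hμ.apply_coordProj, ← htotal]
    exact Finset.sum_le_sum_of_subset (Finset.subset_univ S)
  · rw [hμ.apply_coordProj]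
    exact (Nat.one_le_iff_ne_zero.2 hk).trans <| Finset.single_le_sum
      (f := fun j => μ (coordProj {j})) (fun _ _ => Nat.zero_le _)
      (Finset.singleton_subset_iff.1 hkS)

theorem exists_isometry (hμ : IsProjMeasure μ) (h1 : 1 ≤ m) (hm : m ≤ n) :
    ∃ E : Matrix (Fin n) (Fin m) ℂ, Eᴴ * E = 1 ∧ μ (E * Eᴴ) = 1 := by
  obtain ⟨S, hS, hSμ⟩ := hμ.exists_coordProj_eq_one h1 hm
  have hf := (S.orderEmbOfFin hS).injective
  refine ⟨coordIsometry (S.orderEmbOfFin hS), conjTranspose_coordIsometry_mul hf, ?_⟩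
  rw [coordIsometry_mul_conjTranspose hf, Finset.image_orderEmbOfFin_univ, hSμ]

theorem comp_conj (hμ : IsProjMeasure μ) {E : Matrix (Fin n) (Fin m) ℂ} (hE : Eᴴ * E = 1)
    (hEμ : μ (E * Eᴴ) = 1) : IsProjMeasure fun A : Matrix (Fin m) (Fin m) ℂ => μ (E * A * Eᴴ) where
  apply_one := by rwa [Matrix.mul_one]
  apply_add {P Q} hP hQ hPQ := by
    simp only [Matrix.mul_add, Matrix.add_mul]
    exact hμ.apply_add (conj_mem_projs hE hP) (conj_mem_projs hE hQ)
      (by rw [conj_mul_conj hE, hPQ, Matrix.mul_zero, Matrix.zero_mul])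

theorem isKSColoring {μ : Matrix (Fin 3) (Fin 3) ℂ → ℕ} (hμ : IsProjMeasure μ) :
    IsKSColoring fun u => μ (Complex.ofRealHom.mapMatrix (rankOneProj u)) := by
  intro u v w hu hv hw huv huw hvw
  set P : (Fin 3 → ℝ) → Matrix (Fin 3) (Fin 3) ℂ :=
    fun x => Complex.ofRealHom.mapMatrix (rankOneProj x)
  have hP : ∀ {x}, x ≠ 0 → P x ∈ Projs 3 := fun hx =>
    ofRealHom_mapMatrix_mem_projs (transpose_rankOneProj _) (rankOneProj_mul_self hx)
  have hPP : ∀ {x y}, x ⬝ᵥ y = 0 → P x * P y = 0 := fun hxy => by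
    simp only [P, ← map_mul, rankOneProj_mul_eq_zero hxy, map_zero]
  have hsum : P u + P v + P w = 1 := by
    let b : Fin 3 → Fin 3 → ℝ := ![u, v, w]
    have horth : Pairwise fun i j => b i ⬝ᵥ b j = 0 := by
      intro i j hij
      fin_cases i <;> fin_cases j <;> simp_all [b, dotProduct_comm]
    have := sum_rankOneProj_eq_one (fun i => by fin_cases i <;> assumption) horth
    simp only [Fin.sum_univ_three, Fin.isValue, cons_val_zero, cons_val_one, cons_val, b] at this
    simp only [P, ← map_add, this, map_one]
  rw [← hμ.apply_one, ← hsum, hμ.apply_add (add_mem_projs (hP hu) (hP hv) (hPP huv)) (hP hw)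
    (by rw [Matrix.add_mul, hPP huw, hPP hvw, add_zero]), hμ.apply_add (hP hu) (hP hv) (hPP huv)]

end IsProjMeasure

theorem kochen_specker (n : ℕ) (hn : 3 ≤ n) :
    ¬ ∃ μ : Projs n → ℕ,
      (∀ I : Projs n, (I : Matrix (Fin n) (Fin n) ℂ) = 1 → μ I = 1) ∧
      (∀ P Q R : Projs n,
        (P : Matrix (Fin n) (Fin n) ℂ) * (Q : Matrix (Fin n) (Fin n) ℂ) = 0 →
        (R : Matrix (Fin n) (Fin n) ℂ) =
          (P : Matrix (Fin n) (Fin n) ℂ) + (Q : Matrix (Fin n) (Fin n) ℂ) →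
        μ R = μ P + μ Q) := by
  classical
  rintro ⟨μ, hμ_one, hμ_add⟩
  let ν : Matrix (Fin n) (Fin n) ℂ → ℕ := fun A => if h : A ∈ Projs n then μ ⟨A, h⟩ else 0
  have hν : IsProjMeasure ν := by
    refine ⟨?_, fun hP hQ hPQ => ?_⟩
    · simp only [ν, dif_pos one_mem_projs]
      exact hμ_one _ rfl
    · simp only [ν, dif_pos hP, dif_pos hQ, dif_pos (add_mem_projs hP hQ hPQ)]
      exact hμ_add _ _ _ hPQ rfl
  obtain ⟨E, hE, hEν⟩ := hν.exists_isometry (by norm_num) hn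
  exact not_isKSColoring _ (hν.comp_conj hE hEν).isKSColoring
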